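/- arXiv:1212.1854 — 2 statements merged into one kernel-verified Lean document; each statement's English description precedes it below -/
import Mathlib

section
/- Let M be a compact metric space and G a group acting on M by isometries such that for every x ∈ M the orbit O_G(x) = {σ(x) : σ ∈ G} has at least k elements, where k ≥ 2 is an integer. Then there exists δ > 0, depending only on M, G and k, such that every x ∈ M admits k points x = x₁, …, x_k in O_G(x) with pairwise distances d(x_i, x_j) ≥ δ for all i ≠ j. -/
/-- Uniform orbit separation: if every orbit of an isometric group action on a compact
metric space has at least `k ≥ 2` elements, then there is `δ > 0` such that every point
`x` admits `k` points of its orbit, the first being `x`, with pairwise distances `≥ δ`. -/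
theorem stmt5 {M : Type*} [MetricSpace M] [CompactSpace M]
    (G : Type*) [Group G] [MulAction G M]
    (hiso : ∀ (σ : G) (x y : M), dist (σ • x) (σ • y) = dist x y)
    (k : ℕ) (hk : 2 ≤ k)
    (horb : ∀ x : M, ∃ s : Finset M, s.card = k ∧ ↑s ⊆ MulAction.orbit G x) :
    ∃ δ > (0:ℝ), ∀ x : M, ∃ xs : Fin k → M,
      xs ⟨0, by omega⟩ = x ∧ (∀ i, xs i ∈ MulAction.orbit G x) ∧
      ∀ i j, i ≠ j → δ ≤ dist (xs i) (xs j) := by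
  classical
  have hT : (Finset.univ.offDiag : Finset (Fin k × Fin k)).Nonempty := by
    refine ⟨(⟨0, by omega⟩, ⟨1, by omega⟩), ?_⟩
    simp [Finset.mem_offDiag, Fin.ext_iff]
  have key : ∀ x : M, ∃ (g : Fin k → G) (ε : ℝ), 0 < ε ∧
      ∀ i j : Fin k, i ≠ j → ε ≤ dist (g i • x) (g j • x) := by
    intro x
    obtain ⟨s, hcard, hsub⟩ := horb x
    have e : Fin k ≃ {y // y ∈ s} := (Fintype.equivFinOfCardEq (by simpa using hcard)).symm
    have hmem : ∀ i : Fin k, ((e i : M)) ∈ MulAction.orbit G x := fun i => hsub (e i).2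
    choose g hg using fun i => MulAction.mem_orbit_iff.mp (hmem i)
    have hinj : Function.Injective (fun i : Fin k => g i • x) := by
      intro i j hij
      simp only [hg] at hij
      exact e.injective (Subtype.ext hij)
    refine ⟨g, (Finset.univ.offDiag).inf' hT
        (fun p => dist (g p.1 • x) (g p.2 • x)), ?_, ?_⟩
    · rw [Finset.lt_inf'_iff]
      rintro ⟨i, j⟩ hp
      simp only [Finset.mem_offDiag] at hp
      exact dist_pos.mpr (fun h => hp.2.2 (hinj h))
    · intro i j hij
      exact Finset.inf'_le (fun p => dist (g p.1 • x) (g p.2 • x)) (b := (i, j)) (Finset.mem_offDiag.mpr ⟨Finset.mem_univ _, Finset.mem_univ _, hij⟩)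
  choose g ε hε hsep using key
  rcases isEmpty_or_nonempty M with hM | hM
  · exact ⟨1, one_pos, fun x => (hM.false x).elim⟩
  have hcov : (Set.univ : Set M) ⊆ ⋃ c, Metric.ball c (ε c / 4) := fun x _ =>
    Set.mem_iUnion.mpr ⟨x, Metric.mem_ball_self (by linarith [hε x])⟩
  obtain ⟨t, ht⟩ := isCompact_univ.elim_finite_subcover
    (fun c => Metric.ball c (ε c / 4)) (fun c => Metric.isOpen_ball) hcov
  have htne : t.Nonempty := by
    obtain ⟨x⟩ := hM
    obtain ⟨c, hc, -⟩ := Set.mem_iUnion₂.mp (ht (Set.mem_univ x))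
    exact ⟨c, hc⟩
  refine ⟨t.inf' htne (fun c => ε c / 2), ?_, ?_⟩
  · rw [gt_iff_lt, Finset.lt_inf'_iff]
    intro c _
    linarith [hε c]
  · intro x
    obtain ⟨c, hc, hx⟩ := Set.mem_iUnion₂.mp (ht (Set.mem_univ x))
    rw [Metric.mem_ball] at hx
    have hsep' : ∀ i j : Fin k, i ≠ j →
        ε c / 2 ≤ dist (g c i • x) (g c j • x) := by
      intro i j hij
      have h1 : dist (g c i • x) (g c i • c) = dist x c := hiso _ _ _
      have h2 : dist (g c j • c) (g c j • x) = dist c x := hiso _ _ _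
      have h3 := hsep c i j hij
      have h4 := dist_triangle4 (g c i • c) (g c i • x) (g c j • x) (g c j • c)
      rw [dist_comm (g c i • c) (g c i • x), dist_comm (g c j • x) (g c j • c)] at h4
      rw [dist_comm c x] at h2
      linarith
    refine ⟨fun i => ((g c ⟨0, by omega⟩)⁻¹ * g c i) • x, ?_, ?_, ?_⟩
    · show ((g c ⟨0, by omega⟩)⁻¹ * g c ⟨0, by omega⟩) • x = x
      rw [mul_smul, inv_smul_smul]
    · intro i; exact ⟨_, rfl⟩
    · intro i j hij
      have : dist (((g c ⟨0, by omega⟩)⁻¹ * g c i) • x)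
          (((g c ⟨0, by omega⟩)⁻¹ * g c j) • x) = dist (g c i • x) (g c j • x) := by
        rw [mul_smul, mul_smul]; exact hiso _ _ _
      show _ ≤ dist (((g c ⟨0, by omega⟩)⁻¹ * g c i) • x) (((g c ⟨0, by omega⟩)⁻¹ * g c j) • x)
      rw [this]
      exact le_trans (Finset.inf'_le _ hc) (hsep' i j hij)
end

section
/- Let y: [0,∞) → [0,∞) be C¹ with ∫₀^∞ y(t) dt < ∞, and suppose there are constants C₁ > 0 and ε > 0 with the property: whenever t₀ ≤ t₁ satisfy y(t₀) ≤ ε and y(t) ≤ 3ε on [t₀,t₁], then y'(t) ≤ C₁(y(t)² + y(t)) on [t₀,t₁]. If moreover for every ε > 0 there exists t₀ with y(t₀) ≤ ε and C₁(1+3ε)∫_{t₀}^∞ y(t) dt ≤ ε, then y(t) → 0 as t → ∞. -/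
open MeasureTheory Set

/-! A first time `t₁ > t₀` with `y(t₁) = 3ε` would, by the differential inequality
`y' ≤ C₁(1 + 3ε) y` on `[t₀, t₁]`, give `2ε ≤ y(t₁) - y(t₀) ≤ C₁(1 + 3ε) ∫_{t₀}^∞ y ≤ ε`.
Hence once `y(t₀) ≤ ε` with small tail integral, `y` stays below `3ε` forever. -/

theorem exists_eq_and_forall_Icc_le_of_le_of_le {α δ : Type*} [ConditionallyCompleteLinearOrder α]
    [TopologicalSpace α] [OrderTopology α] [DenselyOrdered α] [LinearOrder δ]
    [TopologicalSpace δ] [OrderClosedTopology δ] {f : α → δ} {a b : α} {c : δ} (hab : a ≤ b)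
    (hf : ContinuousOn f (Icc a b)) (ha : f a ≤ c) (hb : c ≤ f b) :
    ∃ t ∈ Icc a b, f t = c ∧ ∀ s ∈ Icc a t, f s ≤ c := by
  set S := Icc a b ∩ f ⁻¹' Ici c
  have hS : IsCompact S := isCompact_Icc.of_isClosed_subset
    (hf.preimage_isClosed_of_isClosed isClosed_Icc isClosed_Ici) inter_subset_left
  obtain ⟨t, ⟨htI, hct⟩, ht_least⟩ := hS.exists_isLeast ⟨b, ⟨⟨hab, le_rfl⟩, hb⟩⟩
  have first : ∀ s ∈ Icc a t, c ≤ f s → s = t := fun s hs hcs =>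
    le_antisymm hs.2 (ht_least ⟨⟨hs.1, hs.2.trans htI.2⟩, hcs⟩)
  obtain ⟨s, hs, hfs⟩ := intermediate_value_Icc htI.1 (hf.mono (Icc_subset_Icc_right htI.2))
    ⟨ha, hct⟩
  have hft : f t = c := first s hs hfs.ge ▸ hfs
  refine ⟨t, htI, hft, fun s hs => le_of_not_gt fun hcs => ?_⟩
  exact hcs.ne' (first s hs hcs.le ▸ hft)

theorem sub_le_mul_integral_Ioi_of_deriv_le {y : ℝ → ℝ} {a b K : ℝ} (hab : a ≤ b) (hK : 0 ≤ K)
    (hy : Differentiable ℝ y) (hpos : ∀ t > a, 0 ≤ y t) (hint : IntegrableOn y (Ioi a))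
    (hderiv : ∀ t ∈ Ioo a b, deriv y t ≤ K * y t) :
    y b - y a ≤ K * ∫ t in Ioi a, y t := by
  have hftc : y b - y a ≤ ∫ t in a..b, K * y t :=
    intervalIntegral.sub_le_integral_of_hasDeriv_right_of_le hab hy.continuous.continuousOn
      (fun t _ => (hy t).hasDerivAt.hasDerivWithinAt)
      (hy.continuous.const_mul K).integrableOn_Icc hderiv
  have hmono : ∫ t in a..b, y t ≤ ∫ t in Ioi a, y t := by
    rw [intervalIntegral.integral_of_le hab]
    exact setIntegral_mono_set hint
      (ae_restrict_of_forall_mem measurableSet_Ioi hpos) Ioc_subset_Ioi_self.eventuallyLE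
  calc y b - y a ≤ ∫ t in a..b, K * y t := hftc
    _ = K * ∫ t in a..b, y t := intervalIntegral.integral_const_mul K _
    _ ≤ K * ∫ t in Ioi a, y t := mul_le_mul_of_nonneg_left hmono hK

/-- Abstract ODE/continuity argument: an integrable nonnegative `C¹` quantity `y`
satisfying the differential inequality `y' ≤ C₁(y² + y)` on intervals where it stays
below `3ε`, and which can be made small with small tail integral, tends to `0`. -/
theorem stmt19 (y : ℝ → ℝ) (hy : ContDiff ℝ 1 y)
    (hpos : ∀ t : ℝ, 0 ≤ t → 0 ≤ y t)
    (hint : IntegrableOn y (Set.Ici (0:ℝ)))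
    (C₁ ε : ℝ) (hC : 0 < C₁) (hε : 0 < ε)
    (hdiff : ∀ t₀ t₁ : ℝ, 0 ≤ t₀ → t₀ ≤ t₁ → y t₀ ≤ ε →
      (∀ t ∈ Set.Icc t₀ t₁, y t ≤ 3 * ε) →
      ∀ t ∈ Set.Icc t₀ t₁, deriv y t ≤ C₁ * ((y t)^2 + y t))
    (hsmall : ∀ ε' > (0:ℝ), ∃ t₀ ≥ (0:ℝ), y t₀ ≤ ε' ∧
      C₁ * (1 + 3 * ε') * (∫ t in Set.Ioi t₀, y t) ≤ ε') :
    Filter.Tendsto y Filter.atTop (nhds 0) := by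
  refine Metric.tendsto_atTop.2 fun δ hδ => ?_
  obtain ⟨η, hη, hηε, hηδ⟩ : ∃ η, 0 < η ∧ η ≤ ε ∧ 3 * η < δ :=
    ⟨min ε (δ / 4), lt_min hε (by positivity), min_le_left _ _,
      by linarith [min_le_right ε (δ / 4)]⟩
  obtain ⟨t₀, ht₀, hyt₀, htail⟩ := hsmall η hη
  have trapped : ∀ s ≥ t₀, y s < 3 * η := by
    intro s hs
    by_contra! hys
    obtain ⟨t₁, ⟨ht₀₁, -⟩, hyt₁, hle⟩ :=
      exists_eq_and_forall_Icc_le_of_le_of_le hs hy.continuous.continuousOn (by linarith) hys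
    have hderiv : ∀ t ∈ Ioo t₀ t₁, deriv y t ≤ C₁ * (1 + 3 * η) * y t := by
      intro t ht
      have hyt : 0 ≤ y t := hpos t (by linarith [ht.1])
      have hyt_le : y t ≤ 3 * η := hle t (Ioo_subset_Icc_self ht)
      have hgrowth := hdiff t₀ t₁ ht₀ ht₀₁ (hyt₀.trans hηε) (fun t ht => (hle t ht).trans (by linarith))
        t (Ioo_subset_Icc_self ht)
      nlinarith [mul_nonneg hC.le (mul_nonneg hyt (sub_nonneg.2 hyt_le))]
    have hrise := sub_le_mul_integral_Ioi_of_deriv_le ht₀₁ (by positivity)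
      (hy.differentiable one_ne_zero) (fun t ht => hpos t (ht₀.trans ht.le))
      (hint.mono_set fun t ht => ht₀.trans (le_of_lt ht)) hderiv
    linarith
  refine ⟨t₀, fun t ht => ?_⟩
  rw [Real.dist_eq, sub_zero, abs_of_nonneg (hpos t (ht₀.trans ht))]
  linarith [trapped t ht]
end
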